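/- arXiv:2407.07459 — 2 statements merged into one kernel-verified Lean document; each statement's English description precedes it below -/
import Mathlib

section
/- Let I, J ⊆ S and let w ∈ W be I-reduced-J. Then W_J ∩ w⁻¹ W_I w = W_{J₁}, where J₁ := {u ∈ J : w u w⁻¹ ∈ W_I}. -/
/-!
The exchange property comes from Tits' action of `W` on `W × ZMod 2`, in which `s_i` sends
`(t, ε)` to `(s_i t s_i, ε + [t = s_i])`: the second coordinate of `w • (t, 0)` is the parity of
the number of occurrences of `t` in the right inversion sequence of any word for `w`, so every
right inversion of `w` occurs in the right inversion sequence of every word for `w`.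

As `w` has no right descent in `J`, it is the shortest element of `w W_J`, hence
`ℓ(w x) = ℓ(w) + ℓ(x)` for `x ∈ W_J`. Let `x ∈ W_J` with `y = w x w⁻¹ ∈ W_I`, and let `s_u`,
`u ∈ J`, be a right descent of `x`. Then `s_u` is a right descent of `y w = w x`; exchanging it
in a word for `y` followed by a word for `w` cannot delete a letter of `w`, since `s_u` is no
descent of `w`. So `y w s_u = y' w` with `y' ∈ W_I`, i.e. `w s_u w⁻¹ ∈ W_I` and `u ∈ J₁`;
induction on `ℓ(x)`, applied to `x s_u`, finishes the proof.
-/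

open scoped Classical

namespace DGM

variable {S : Type*} {W : Type*} [Group W] {M : CoxeterMatrix S}

/-- The standard parabolic subgroup `W_I` of `W`, generated by the simple
reflections indexed by `I ⊆ S`. -/
def WP (cs : CoxeterSystem M W) (I : Set S) : Subgroup W :=
  Subgroup.closure (cs.simple '' I)

/-- `w` is `I`-reduced: `ℓ(sw) > ℓ(w)` for every `s ∈ I`. -/
def IsLeftReduced (cs : CoxeterSystem M W) (I : Set S) (w : W) : Prop :=
  ∀ s ∈ I, cs.length w < cs.length (cs.simple s * w)

/-- `w` is reduced-`J`: `ℓ(ws) > ℓ(w)` for every `s ∈ J`. -/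
def IsRightReduced (cs : CoxeterSystem M W) (J : Set S) (w : W) : Prop :=
  ∀ s ∈ J, cs.length w < cs.length (w * cs.simple s)

section ReflectionParity

open CoxeterSystem

variable (cs : CoxeterSystem M W)

lemma conj_eq_iff_eq_conj {G : Type*} [Group G] (g t a : G) :
    g * t * g⁻¹ = a ↔ t = g⁻¹ * a * g := by
  constructor <;> rintro rfl <;> group

lemma end_mul_apply {α : Type*} (f g : Function.End α) (x : α) : (f * g) x = f (g x) := rfl

lemma end_one_apply {α : Type*} (x : α) : (1 : Function.End α) x = x := rfl

noncomputable def simpleAct (i : S) : Function.End (W × ZMod 2) :=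
  fun p => (cs.simple i * p.1 * cs.simple i, p.2 + if p.1 = cs.simple i then 1 else 0)

lemma simpleAct_apply (i : S) (t : W) (ε : ZMod 2) :
    simpleAct cs i (t, ε) = (cs.simple i * t * cs.simple i, ε + if t = cs.simple i then 1 else 0) :=
  rfl

lemma simpleAct_mul_pow (i i' : S) (k : ℕ) (t : W) (ε : ZMod 2) :
    ((simpleAct cs i * simpleAct cs i') ^ k) (t, ε) =
      ((cs.simple i * cs.simple i') ^ k * t * ((cs.simple i * cs.simple i') ^ k)⁻¹,
        ε + ∑ a ∈ Finset.range (2 * k),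
          if t = cs.simple i' * (cs.simple i * cs.simple i') ^ a then 1 else 0) := by
  set p := cs.simple i * cs.simple i'
  induction k with
  | zero => simp [end_one_apply]
  | succ k ih =>
    have hsemiconj : SemiconjBy (cs.simple i') p p⁻¹ := by
      simp only [SemiconjBy, p, mul_inv_rev, inv_simple, ← mul_assoc]
    have hconj : (p ^ k)⁻¹ * cs.simple i' * p ^ k = cs.simple i' * p ^ (2 * k) := by
      rw [← inv_pow, ← (hsemiconj.pow_right k).eq, mul_assoc, ← pow_add, two_mul]
    rw [pow_succ', end_mul_apply, end_mul_apply, ih]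
    simp only [simpleAct_apply, Prod.mk.injEq]
    constructor
    · simp only [p, pow_succ', mul_inv_rev, inv_simple]
      group
    · rw [conj_eq_iff_eq_conj, hconj]
      have hconj' : cs.simple i' * (p ^ k * t * (p ^ k)⁻¹) * cs.simple i' = cs.simple i ↔
          t = cs.simple i' * p ^ (2 * k + 1) := by
        have h : cs.simple i' * (p ^ k * t * (p ^ k)⁻¹) * cs.simple i' =
            (cs.simple i' * p ^ k) * t * (cs.simple i' * p ^ k)⁻¹ := by
          rw [mul_inv_rev, inv_simple]; group
        rw [h, conj_eq_iff_eq_conj, pow_succ, ← mul_assoc (cs.simple i'), ← hconj,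
          mul_assoc _ (p ^ k) p, ← pow_succ, pow_succ', mul_inv_rev, inv_simple]
        simp only [p, mul_assoc]
      rw [hconj', show 2 * (k + 1) = 2 * k + 1 + 1 by ring, Finset.sum_range_succ,
        Finset.sum_range_succ]
      ring

lemma isLiftable_simpleAct : M.IsLiftable (simpleAct cs) := by
  intro i i'
  funext ⟨t, ε⟩
  set p := cs.simple i * cs.simple i'
  have hp : p ^ M i i' = 1 := cs.simple_mul_simple_pow i i'
  have hsum : ∑ a ∈ Finset.range (2 * M i i'),
      (if t = cs.simple i' * p ^ a then 1 else 0 : ZMod 2) = 0 := by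
    rw [two_mul, Finset.sum_range_add]
    simp_rw [pow_add, hp, one_mul, ← two_mul]
    exact mul_eq_zero_of_left (ZMod.natCast_self 2) _
  rw [simpleAct_mul_pow, hp, hsum, end_one_apply]
  simp

noncomputable def reflRep : W →* Function.End (W × ZMod 2) :=
  cs.lift ⟨simpleAct cs, isLiftable_simpleAct cs⟩

lemma reflRep_wordProd (ω : List S) (t : W) (ε : ZMod 2) :
    reflRep cs (cs.wordProd ω) (t, ε) =
      (cs.wordProd ω * t * (cs.wordProd ω)⁻¹, ε + (cs.rightInvSeq ω).count t) := by
  induction ω generalizing ε with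
  | nil => simp [end_one_apply]
  | cons i ω ih =>
    rw [wordProd_cons, map_mul, end_mul_apply, ih, reflRep, lift_apply_simple, simpleAct_apply]
    simp only [rightInvSeq, List.count_cons, beq_iff_eq, conj_eq_iff_eq_conj, eq_comm (a := t),
      Prod.mk.injEq, mul_inv_rev, inv_simple]
    constructor
    · group
    · push_cast
      ring

noncomputable def inversionParity (w t : W) : ZMod 2 := (reflRep cs w (t, 0)).2

lemma reflRep_apply (w t : W) (ε : ZMod 2) :
    reflRep cs w (t, ε) = (w * t * w⁻¹, ε + inversionParity cs w t) := by
  obtain ⟨ω, -, rfl⟩ := cs.exists_isReduced w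
  simp [inversionParity, reflRep_wordProd]

lemma inversionParity_wordProd (ω : List S) (t : W) :
    inversionParity cs (cs.wordProd ω) t = (cs.rightInvSeq ω).count t := by
  simp [inversionParity, reflRep_wordProd]

lemma inversionParity_mul (w₁ w₂ t : W) :
    inversionParity cs (w₁ * w₂) t =
      inversionParity cs w₂ t + inversionParity cs w₁ (w₂ * t * w₂⁻¹) := by
  rw [inversionParity, map_mul, end_mul_apply, reflRep_apply cs w₂, reflRep_apply cs w₁, zero_add]

lemma inversionParity_one (t : W) : inversionParity cs 1 t = 0 := by
  simpa using inversionParity_wordProd cs [] t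

lemma inversionParity_simple_self (i : S) :
    inversionParity cs (cs.simple i) (cs.simple i) = 1 := by
  simp [inversionParity, reflRep, simpleAct_apply]

lemma inversionParity_self_of_isReflection {t : W} (ht : cs.IsReflection t) :
    inversionParity cs t t = 1 := by
  obtain ⟨v, i, rfl⟩ := ht
  have hcancel := inversionParity_mul cs v v⁻¹ (v * cs.simple i * v⁻¹)
  rw [mul_inv_cancel, inversionParity_one] at hcancel
  rw [inversionParity_mul, inversionParity_mul cs v]
  have hs : v⁻¹ * (v * cs.simple i * v⁻¹) * v⁻¹⁻¹ = cs.simple i := by group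
  rw [hs] at hcancel
  rw [hs, inv_simple, simple_mul_simple_cancel_right, inversionParity_simple_self]
  linear_combination -hcancel

theorem mem_rightInvSeq_of_isRightInversion {ω : List S} {t : W}
    (ht : cs.IsRightInversion (cs.wordProd ω) t) : t ∈ cs.rightInvSeq ω := by
  have mem_of_parity : ∀ ρ : List S,
      inversionParity cs (cs.wordProd ρ) t ≠ 0 → t ∈ cs.rightInvSeq ρ := by
    intro ρ h
    by_contra hnot
    rw [inversionParity_wordProd, List.count_eq_zero_of_not_mem hnot, Nat.cast_zero] at h
    exact h rfl
  apply mem_of_parity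
  intro h0
  obtain ⟨ρ, hρ, hρeq⟩ := cs.exists_isReduced (cs.wordProd ω * t)
  have hpar : inversionParity cs (cs.wordProd ρ) t ≠ 0 := by
    rw [← hρeq, inversionParity_mul, inversionParity_self_of_isReflection cs ht.1,
      mul_inv_cancel_right, h0, add_zero]
    exact one_ne_zero
  have hlt := (cs.isRightInversion_of_mem_rightInvSeq hρ (mem_of_parity ρ hpar)).2
  rw [← hρeq, mul_assoc, ht.1.mul_self, mul_one] at hlt
  exact ht.2.asymm hlt

theorem exists_eraseIdx_of_isRightInversion {ω : List S} {t : W}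
    (ht : cs.IsRightInversion (cs.wordProd ω) t) :
    ∃ j < ω.length, cs.wordProd ω * t = cs.wordProd (ω.eraseIdx j) := by
  obtain ⟨j, hj, rfl⟩ := List.mem_iff_getElem.mp (mem_rightInvSeq_of_isRightInversion cs ht)
  refine ⟨j, by simpa using hj, ?_⟩
  rw [← List.getD_eq_getElem _ 1 hj, wordProd_mul_getD_rightInvSeq]

end ReflectionParity

section Parabolic

open CoxeterSystem

variable (cs : CoxeterSystem M W)

lemma simple_mem_WP {J : Set S} {u : S} (hu : u ∈ J) : cs.simple u ∈ WP cs J :=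
  Subgroup.subset_closure ⟨u, hu, rfl⟩

lemma wordProd_mem_WP {J : Set S} {ω : List S} (hω : ∀ i ∈ ω, i ∈ J) :
    cs.wordProd ω ∈ WP cs J :=
  Subgroup.list_prod_mem _ fun _ hx ↦ by
    obtain ⟨i, hi, rfl⟩ := List.mem_map.mp hx
    exact simple_mem_WP cs (hω i hi)

lemma exists_isReduced_sublist_mul_simple {ω : List S} (hω : cs.IsReduced ω) (i : S) :
    ∃ ω', cs.IsReduced ω' ∧ ω'.Sublist (ω ++ [i]) ∧
      cs.wordProd ω' = cs.wordProd ω * cs.simple i := by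
  rcases cs.length_mul_simple (cs.wordProd ω) i with hup | hdown
  · refine ⟨ω ++ [i], ?_, List.Sublist.refl _, by simp [wordProd_append]⟩
    simp [CoxeterSystem.IsReduced, wordProd_append, hup, hω.eq]
  · have hdesc : cs.IsRightDescent (cs.wordProd ω) i := cs.isRightDescent_iff.mpr hdown
    obtain ⟨j, hj, heq⟩ := exists_eraseIdx_of_isRightInversion cs
      ((cs.isRightInversion_simple_iff_isRightDescent _ i).mpr hdesc)
    refine ⟨ω.eraseIdx j, ?_, (List.eraseIdx_sublist ω j).trans (List.sublist_append_left _ _),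
      heq.symm⟩
    have := List.length_eraseIdx_add_one hj
    have := hω.eq
    rw [CoxeterSystem.IsReduced, ← heq]
    omega

lemma exists_isReduced_of_mem_WP {J : Set S} {x : W} (hx : x ∈ WP cs J) :
    ∃ ω, (∀ i ∈ ω, i ∈ J) ∧ cs.IsReduced ω ∧ cs.wordProd ω = x := by
  have step : ∀ x, ∀ u ∈ J, (∃ ω, (∀ i ∈ ω, i ∈ J) ∧ cs.IsReduced ω ∧ cs.wordProd ω = x) →
      ∃ ω, (∀ i ∈ ω, i ∈ J) ∧ cs.IsReduced ω ∧ cs.wordProd ω = x * cs.simple u := by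
    rintro _ u hu ⟨ω, hωJ, hω, rfl⟩
    obtain ⟨ω', hω', hsub, heq⟩ := exists_isReduced_sublist_mul_simple cs hω u
    refine ⟨ω', fun i hi ↦ ?_, hω', heq⟩
    rcases List.mem_append.mp (hsub.subset hi) with hi | hi
    · exact hωJ i hi
    · rw [List.mem_singleton.mp hi]; exact hu
  induction hx using Subgroup.closure_induction_right with
  | one => exact ⟨[], by simp, by simp [CoxeterSystem.IsReduced], rfl⟩
  | mul_right x _ _ hy ih =>
    obtain ⟨u, hu, rfl⟩ := hy
    exact step x u hu ih
  | mul_inv_cancel x _ _ hy ih =>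
    obtain ⟨u, hu, rfl⟩ := hy
    rw [inv_simple]
    exact step x u hu ih

lemma exists_isRightDescent_mem_of_mem_WP {J : Set S} {x : W} (hx : x ∈ WP cs J) (hx1 : x ≠ 1) :
    ∃ u ∈ J, cs.IsRightDescent x u := by
  obtain ⟨ω, hωJ, hω, rfl⟩ := exists_isReduced_of_mem_WP cs hx
  rcases List.eq_nil_or_concat ω with rfl | ⟨ω, u, rfl⟩
  · exact absurd rfl hx1
  refine ⟨u, hωJ u (by simp), ?_⟩
  rw [IsRightDescent, hω.eq, wordProd_concat, simple_mul_simple_cancel_right]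
  calc cs.length (cs.wordProd ω) ≤ ω.length := cs.length_wordProd_le ω
    _ < (ω.concat u).length := by simp

end Parabolic

section LengthAdditivity

open CoxeterSystem

variable {cs : CoxeterSystem M W}

theorem exchange_wordProd_mul {γ : List S} {b : W} {i : S}
    (hdesc : cs.IsRightDescent (cs.wordProd γ * b) i) :
    cs.IsRightDescent b i ∨
      ∃ j < γ.length, cs.wordProd γ * b * cs.simple i = cs.wordProd (γ.eraseIdx j) * b := by
  obtain ⟨α, hα, rfl⟩ := cs.exists_isReduced b
  rw [← wordProd_append, ← isRightInversion_simple_iff_isRightDescent] at hdesc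
  obtain ⟨j, hj, heq⟩ := exists_eraseIdx_of_isRightInversion cs hdesc
  rcases lt_or_ge j γ.length with hjγ | hjγ
  · right
    refine ⟨j, hjγ, ?_⟩
    rwa [List.eraseIdx_append_of_lt_length hjγ, wordProd_append, wordProd_append] at heq
  · left
    rw [List.eraseIdx_append_of_length_le hjγ, wordProd_append, wordProd_append, mul_assoc,
      mul_right_inj] at heq
    have hk : j - γ.length < α.length := by rw [List.length_append] at hj; omega
    rw [IsRightDescent, heq, hα.eq]
    calc cs.length (cs.wordProd (α.eraseIdx (j - γ.length)))
        ≤ (α.eraseIdx (j - γ.length)).length := cs.length_wordProd_le _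
      _ < α.length := by rw [← List.length_eraseIdx_add_one hk]; exact lt_add_one _

theorem length_mul_of_forall_le {J : Set S} {w : W}
    (hmin : ∀ x ∈ WP cs J, cs.length w ≤ cs.length (w * x)) {x : W} (hx : x ∈ WP cs J) :
    cs.length (w * x) = cs.length w + cs.length x := by
  induction hlen : cs.length x using Nat.strong_induction_on generalizing x with
  | _ n ih =>
  subst hlen
  by_cases hx1 : x = 1
  · simp [hx1]
  obtain ⟨u, hu, hdesc⟩ := exists_isRightDescent_mem_of_mem_WP cs hx hx1
  set x' := x * cs.simple u
  have hx' : x' ∈ WP cs J := mul_mem hx (simple_mem_WP cs hu)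
  have hx'len : cs.length x' + 1 = cs.length x := cs.isRightDescent_iff.mp hdesc
  have ih' := ih _ (by omega) hx' rfl
  have hx_eq : x = x' * cs.simple u := by simp [x']
  rw [show w * x = w * x' * cs.simple u by simp [x', mul_assoc]]
  rcases cs.length_mul_simple (w * x') u with hup | hdown
  · omega
  -- Otherwise exchange deletes a letter of `w`, making `w (x' s_u x'⁻¹) ∈ w W_J` shorter than `w`.
  obtain ⟨γ, hγ, rfl⟩ := cs.exists_isReduced w
  rcases exchange_wordProd_mul (cs.isRightDescent_iff.mpr hdown) with hdesc' | ⟨j, hj, heq⟩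
  · rw [cs.isRightDescent_iff, ← hx_eq] at hdesc'
    omega
  · have hrefl : x' * cs.simple u * x'⁻¹ ∈ WP cs J :=
      mul_mem (mul_mem hx' (simple_mem_WP cs hu)) (inv_mem hx')
    have hle := hmin _ hrefl
    rw [← mul_assoc, ← mul_assoc, heq, mul_inv_cancel_right, hγ.eq] at hle
    have := cs.length_wordProd_le (γ.eraseIdx j)
    have := List.length_eraseIdx_add_one hj
    omega

theorem IsRightReduced.le_length_mul {J : Set S} {w : W} (h : IsRightReduced cs J w) {x : W}
    (hx : x ∈ WP cs J) : cs.length w ≤ cs.length (w * x) := by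
  -- `w x₀` is a shortest element of `w W_J`; a descent of `x₀⁻¹` in `J` would be one of `w`.
  obtain ⟨x₀, hx₀, hx₀min⟩ := (measure fun x ↦ cs.length (w * x)).wf.has_min
    (WP cs J : Set W) ⟨1, one_mem _⟩
  have hmin : ∀ x ∈ WP cs J, cs.length (w * x₀) ≤ cs.length (w * x₀ * x) := fun x hx ↦ by
    rw [mul_assoc]
    exact not_lt.mp (hx₀min _ (mul_mem hx₀ hx))
  obtain rfl : x₀ = 1 := by
    by_contra hx₀1
    obtain ⟨u, hu, hdesc⟩ :=
      exists_isRightDescent_mem_of_mem_WP cs (inv_mem hx₀) (inv_ne_one.mpr hx₀1)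
    have hw := length_mul_of_forall_le hmin (inv_mem hx₀)
    have hwu := length_mul_of_forall_le hmin (mul_mem (inv_mem hx₀) (simple_mem_WP cs hu))
    rw [mul_inv_cancel_right] at hw
    rw [← mul_assoc, mul_inv_cancel_right] at hwu
    have hdesc' : cs.length (x₀⁻¹ * cs.simple u) < cs.length x₀⁻¹ := hdesc
    have := h u hu
    omega
  simpa using hmin x hx

theorem IsRightReduced.length_mul {J : Set S} {w : W} (h : IsRightReduced cs J w) {x : W}
    (hx : x ∈ WP cs J) : cs.length (w * x) = cs.length w + cs.length x :=
  length_mul_of_forall_le (fun _ ↦ h.le_length_mul) hx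

end LengthAdditivity

section Solomon

open CoxeterSystem

variable {cs : CoxeterSystem M W} {I J : Set S} {w : W}

theorem IsRightReduced.conj_simple_mem_WP (h : IsRightReduced cs J w) {x : W}
    (hxJ : x ∈ WP cs J) (hxI : w * x * w⁻¹ ∈ WP cs I) {u : S} (hu : u ∈ J)
    (hdesc : cs.IsRightDescent x u) : w * cs.simple u * w⁻¹ ∈ WP cs I := by
  obtain ⟨γ, hγI, -, hγ⟩ := exists_isReduced_of_mem_WP cs hxI
  have hdesc' : cs.IsRightDescent (cs.wordProd γ * w) u := by
    rw [hγ, inv_mul_cancel_right, IsRightDescent, mul_assoc, h.length_mul hxJ,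
      h.length_mul (mul_mem hxJ (simple_mem_WP cs hu))]
    exact Nat.add_lt_add_left hdesc _
  rcases exchange_wordProd_mul hdesc' with hw | ⟨j, -, heq⟩
  · exact absurd (h u hu) hw.asymm
  · have hconj : w * cs.simple u * w⁻¹ = (w * x * w⁻¹)⁻¹ * cs.wordProd (γ.eraseIdx j) := by
      rw [← hγ, eq_mul_inv_of_mul_eq heq.symm]
      group
    rw [hconj]
    exact mul_mem (inv_mem hxI)
      (wordProd_mem_WP cs fun i hi ↦ hγI i ((List.eraseIdx_sublist γ j).subset hi))

theorem IsRightReduced.mem_WP_of_conj_mem (h : IsRightReduced cs J w) {x : W}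
    (hxJ : x ∈ WP cs J) (hxI : w * x * w⁻¹ ∈ WP cs I) :
    x ∈ WP cs {u | u ∈ J ∧ w * cs.simple u * w⁻¹ ∈ WP cs I} := by
  induction hlen : cs.length x using Nat.strong_induction_on generalizing x with
  | _ n ih =>
  subst hlen
  by_cases hx1 : x = 1
  · exact hx1 ▸ one_mem _
  obtain ⟨u, hu, hdesc⟩ := exists_isRightDescent_mem_of_mem_WP cs hxJ hx1
  have huI := h.conj_simple_mem_WP hxJ hxI hu hdesc
  have hx'I : w * (x * cs.simple u) * w⁻¹ ∈ WP cs I := by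
    have hsplit : w * (x * cs.simple u) * w⁻¹ = (w * x * w⁻¹) * (w * cs.simple u * w⁻¹) := by
      group
    exact hsplit ▸ mul_mem hxI huI
  have hx' := ih _ hdesc (mul_mem hxJ (simple_mem_WP cs hu)) hx'I rfl
  simpa using mul_mem hx' (simple_mem_WP cs ⟨hu, huI⟩)

end Solomon

theorem solomon_general (cs : CoxeterSystem M W) (I J : Set S) (w : W)
    (h2 : IsRightReduced cs J w) :
    WP cs J ⊓ (WP cs I).map (MulAut.conj w⁻¹).toMonoidHom
      = WP cs {u | u ∈ J ∧ w * cs.simple u * w⁻¹ ∈ WP cs I} := by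
  apply le_antisymm
  · intro x hx
    rw [Subgroup.mem_inf, Subgroup.mem_map_equiv, MulAut.conj_symm_apply, inv_inv] at hx
    exact h2.mem_WP_of_conj_mem hx.1 hx.2
  · rw [WP, Subgroup.closure_le]
    rintro _ ⟨u, ⟨huJ, huI⟩, rfl⟩
    refine ⟨simple_mem_WP cs huJ, Subgroup.mem_map_equiv.mpr ?_⟩
    simpa using huI

/-- (Solomon)  If `w` is `I`-reduced-`J`, then `W_J ∩ w⁻¹ W_I w = W_{J₁}` where
`J₁ := {u ∈ J : w u w⁻¹ ∈ W_I}`. -/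
theorem solomon (cs : CoxeterSystem M W) (I J : Set S) (w : W)
    (h1 : IsLeftReduced cs I w) (h2 : IsRightReduced cs J w) :
    WP cs J ⊓ (WP cs I).map (MulAut.conj w⁻¹).toMonoidHom
      = WP cs {u | u ∈ J ∧ w * cs.simple u * w⁻¹ ∈ WP cs I} :=
  solomon_general cs I J w h2

end DGM
end

section
/- For every w ∈ W and every I ⊆ S, π_I(w) := w · t_I(w)⁻¹ is the unique element v ∈ W_I such that N(v) = N(w) ∩ T_I. -/
/-!
Tits' sign cocycle: `s ↦ (δ_s, s)` respects the Coxeter relations in `(W → ℤˣ) ⋊ W`, so it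
lifts to a homomorphism `w ↦ (η(w), w)` with `η(uv)(x) = η(u)(x) · η(v)(u⁻¹xu)`, and
`η(w)(t) = -1` exactly for `t ∈ N(w)`. Hence `N(w)` determines `η(w)`, and `η(v) = η(v')`
forces `N(v⁻¹v') = ∅`, i.e. `v = v'`.

Write `w = π d` with `π = w t_I(w)⁻¹ ∈ W_I` and `d = t_I(w)`. Minimality of `d` in `W_I d`
means `N(d) ∩ T_I = ∅`; since `π⁻¹ T_I π = T_I`, the cocycle rule gives
`η(w) = η(π)` on `T_I`, and `N(π) ⊆ T_I` because `η(π)` is supported in `W_I`.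
So `N(w) ∩ T_I = N(π)`, and uniqueness is injectivity of `N`.
-/

open scoped Classical

namespace DGM

variable {S : Type*} {W : Type*} [Group W] {M : CoxeterMatrix S}

/-- `t_I(w)`: the unique element of minimal length of the coset `W_I w`. -/
noncomputable def tP (cs : CoxeterSystem M W) (I : Set S) (w : W) : W :=
  Classical.epsilon (fun v =>
    (∃ u ∈ WP cs I, v = u * w) ∧
      ∀ v', (∃ u ∈ WP cs I, v' = u * w) → cs.length v ≤ cs.length v')

/-- The left inversion set `N(w) = {t ∈ T : ℓ(tw) < ℓ(w)}`. -/
def NSet (cs : CoxeterSystem M W) (w : W) : Set W :=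
  {t | cs.IsReflection t ∧ cs.length (t * w) < cs.length w}

section SignCocycle

def conjArrow : W →* MulAut (W → ℤˣ) :=
  mulAutArrow.comp (ConjAct.toConjAct : W ≃* ConjAct W).toMonoidHom

lemma conjArrow_apply (g : W) (f : W → ℤˣ) (x : W) : conjArrow g f x = f (g⁻¹ * x * g) := by
  show f ((ConjAct.toConjAct g)⁻¹ • x) = _
  rw [ConjAct.smul_def]
  simp

lemma conjArrow_mulSingle (g x : W) (c : ℤˣ) :
    conjArrow g (Pi.mulSingle x c) = Pi.mulSingle (g * x * g⁻¹) c := by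
  funext y
  simp only [conjArrow_apply, Pi.mulSingle_apply]
  congr 1
  apply propext
  constructor <;> rintro rfl <;> group

noncomputable def signGen (x : W) : (W → ℤˣ) ⋊[conjArrow] W := ⟨Pi.mulSingle x (-1), x⟩

lemma mul_inv_pow_eq_pow_mul {s s' : W} (hs : s * s = 1) (hs' : s' * s' = 1) (k : ℕ) :
    s * ((s * s') ^ k)⁻¹ = (s * s') ^ k * s := by
  induction k with
  | zero => simp
  | succ k ih =>
    have h1 : s * (s * s')⁻¹ = s * s' * s := by
      rw [mul_inv_rev, inv_eq_of_mul_eq_one_right hs, inv_eq_of_mul_eq_one_right hs', mul_assoc]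
    calc s * ((s * s') ^ (k + 1))⁻¹ = s * ((s * s') ^ k)⁻¹ * (s * s')⁻¹ := by
          rw [pow_succ', mul_inv_rev, mul_assoc]
      _ = (s * s') ^ k * (s * s' * s) := by rw [ih, mul_assoc, h1]
      _ = (s * s') ^ (k + 1) * s := by rw [pow_succ, mul_assoc, mul_assoc, mul_assoc]

lemma signGen_mul_pow {s s' : W} (hs : s * s = 1) (hs' : s' * s' = 1) (k : ℕ) :
    (signGen s * signGen s') ^ k =
      ⟨∏ j ∈ Finset.range (2 * k), Pi.mulSingle ((s * s') ^ j * s) (-1), (s * s') ^ k⟩ := by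
  induction k with
  | zero => ext <;> simp
  | succ k ih =>
    have e1 : (s * s') ^ k * s * ((s * s') ^ k)⁻¹ = (s * s') ^ (2 * k) * s := by
      rw [mul_assoc, mul_inv_pow_eq_pow_mul hs hs', ← mul_assoc, ← pow_add, two_mul]
    have e2 : (s * s') ^ k * (s * s' * s⁻¹) * ((s * s') ^ k)⁻¹ = (s * s') ^ (2 * k + 1) * s := by
      rw [inv_eq_of_mul_eq_one_right hs, mul_assoc, mul_assoc, mul_inv_pow_eq_pow_mul hs hs',
        ← mul_assoc, ← mul_assoc, ← pow_succ, ← pow_add]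
      ring_nf
    rw [pow_succ, ih]
    ext : 1
    · simp only [SemidirectProduct.mul_left, signGen, map_mul,
        conjArrow_mulSingle, e1, e2]
      rw [mul_add_one, Finset.prod_range_succ, Finset.prod_range_succ, mul_assoc]
    · simp only [SemidirectProduct.mul_right, signGen, pow_succ]

/-- The reflections `(ss')ʲs`, `j < 2m`, of the dihedral group `⟨s, s'⟩` repeat with period `m`,
so each occurs an even number of times. -/
lemma signGen_mul_pow_eq_one {s s' : W} (hs : s * s = 1) (hs' : s' * s' = 1) {m : ℕ}
    (hm : (s * s') ^ m = 1) : (signGen s * signGen s') ^ m = 1 := by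
  rw [signGen_mul_pow hs hs', SemidirectProduct.ext_iff]
  refine ⟨?_, hm⟩
  have hper : ∀ j, (s * s') ^ (m + j) * s = (s * s') ^ j * s := by
    intro j; rw [pow_add, hm, one_mul]
  rw [two_mul, Finset.prod_range_add]
  simp only [hper]
  funext x
  exact Int.units_mul_self _

end SignCocycle

section InversionSign

variable (cs : CoxeterSystem M W)

lemma isLiftable_signGen : M.IsLiftable (fun i => signGen (cs.simple i)) := fun i j =>
  signGen_mul_pow_eq_one (cs.simple_mul_simple_self i) (cs.simple_mul_simple_self j)
    (cs.simple_mul_simple_pow i j)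

noncomputable def signLift : W →* (W → ℤˣ) ⋊[conjArrow] W :=
  cs.lift ⟨_, isLiftable_signGen cs⟩

lemma signLift_simple (i : S) : signLift cs (cs.simple i) = signGen (cs.simple i) :=
  cs.lift_apply_simple (isLiftable_signGen cs) i

lemma signLift_right (w : W) : (signLift cs w).right = w := by
  have : SemidirectProduct.rightHom.comp (signLift cs) = MonoidHom.id W :=
    cs.ext_simple fun i => by simp [signLift_simple, signGen]
  exact DFunLike.congr_fun this w

/-- `inversionSign cs w t` is `(-1)` to the number of occurrences of `t` in the left inversion
sequence of any word for `w`. -/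
noncomputable def inversionSign (w : W) : W → ℤˣ := (signLift cs w).left

lemma inversionSign_one : inversionSign cs 1 = 1 := by
  simp [inversionSign]

lemma inversionSign_simple (i : S) :
    inversionSign cs (cs.simple i) = Pi.mulSingle (cs.simple i) (-1) := by
  simp [inversionSign, signLift_simple, signGen]

lemma inversionSign_mul (u v x : W) :
    inversionSign cs (u * v) x = inversionSign cs u x * inversionSign cs v (u⁻¹ * x * u) := by
  simp only [inversionSign, map_mul, SemidirectProduct.mul_left, signLift_right, Pi.mul_apply,
    conjArrow_apply]

lemma inversionSign_inv (u x : W) :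
    inversionSign cs u⁻¹ x = inversionSign cs u (u * x * u⁻¹) := by
  rw [inversionSign, map_inv, SemidirectProduct.inv_left, signLift_right, conjArrow_apply, inv_inv,
    Pi.inv_apply, Int.units_inv_eq_self, inversionSign]

lemma inversionSign_self {t : W} (ht : cs.IsReflection t) : inversionSign cs t t = -1 := by
  obtain ⟨u, i, rfl⟩ := ht
  have e1 : u⁻¹ * (u * (cs.simple i * u⁻¹)) * u = cs.simple i := by group
  have e2 : u * ((cs.simple i)⁻¹ * cs.simple i * cs.simple i) * u⁻¹ = u * (cs.simple i * u⁻¹) := by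
    group
  rw [mul_assoc u, inversionSign_mul, inversionSign_mul, e1, inversionSign_inv, e2,
    inversionSign_simple, Pi.mulSingle_eq_same, mul_left_comm, Int.units_mul_self, mul_one]

lemma inversionSign_eq_one_of_not_isReflection {x : W} (hx : ¬cs.IsReflection x) (w : W) :
    inversionSign cs w x = 1 := by
  induction w using cs.simple_induction generalizing x with
  | simple i =>
    rw [inversionSign_simple, Pi.mulSingle_eq_of_ne]
    rintro rfl
    exact hx (cs.isReflection_simple i)
  | one => rw [inversionSign_one, Pi.one_apply]
  | mul u v hu hv =>
    rw [inversionSign_mul, hu hx, hv, one_mul]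
    simpa only [inv_inv] using (cs.isReflection_conj_iff u⁻¹ x).not.mpr hx

lemma length_mul_lt_of_inversionSign_eq_neg_one {w t : W} (h : inversionSign cs w t = -1) :
    cs.length (t * w) < cs.length w := by
  induction hn : cs.length w using Nat.strong_induction_on generalizing w t with
  | _ n ih =>
  rcases eq_or_ne w 1 with rfl | hw
  · simp [inversionSign_one] at h
  obtain ⟨i, hi⟩ := cs.exists_leftDescent_of_ne_one hw
  obtain ⟨w', rfl⟩ : ∃ w', w = cs.simple i * w' :=
    ⟨cs.simple i * w, (cs.simple_mul_simple_cancel_left i).symm⟩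
  rw [CoxeterSystem.IsLeftDescent, cs.simple_mul_simple_cancel_left] at hi
  by_cases ht : t = cs.simple i
  · rw [ht, cs.simple_mul_simple_cancel_left, ← hn]; exact hi
  have h' : inversionSign cs w' ((cs.simple i)⁻¹ * t * cs.simple i) = -1 := by
    rwa [inversionSign_mul, inversionSign_simple, Pi.mulSingle_eq_of_ne ht, one_mul] at h
  have hlt := ih _ (hn ▸ hi) h' rfl
  calc cs.length (t * (cs.simple i * w'))
      = cs.length (cs.simple i * ((cs.simple i)⁻¹ * t * cs.simple i * w')) := by group
    _ ≤ 1 + cs.length ((cs.simple i)⁻¹ * t * cs.simple i * w') :=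
        (cs.length_mul_le _ _).trans_eq (by rw [cs.length_simple])
    _ < n := by have := cs.length_mul_le (cs.simple i) w'; rw [cs.length_simple] at this; omega

lemma inversionSign_eq_neg_one_iff {w t : W} (ht : cs.IsReflection t) :
    inversionSign cs w t = -1 ↔ cs.length (t * w) < cs.length w := by
  refine ⟨length_mul_lt_of_inversionSign_eq_neg_one cs, fun hlt => ?_⟩
  by_contra hne
  have h : inversionSign cs (t * w) t = -1 := by
    rw [inversionSign_mul, inversionSign_self cs ht, ht.inv, ht.mul_self, one_mul,
      (Int.units_eq_one_or _).resolve_right hne, mul_one]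
  have := length_mul_lt_of_inversionSign_eq_neg_one cs h
  rw [← mul_assoc, ht.mul_self, one_mul] at this
  omega

lemma mem_NSet_iff {w x : W} : x ∈ NSet cs w ↔ inversionSign cs w x = -1 := by
  refine ⟨fun ⟨hx, hlt⟩ => (inversionSign_eq_neg_one_iff cs hx).2 hlt, fun h => ?_⟩
  have hx : cs.IsReflection x := by
    by_contra hx
    rw [inversionSign_eq_one_of_not_isReflection cs hx] at h
    exact absurd h (by decide)
  exact ⟨hx, (inversionSign_eq_neg_one_iff cs hx).1 h⟩

lemma inversionSign_eq_of_NSet_eq {v w : W} (h : NSet cs v = NSet cs w) :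
    inversionSign cs v = inversionSign cs w := by
  funext x
  have hx : inversionSign cs v x = -1 ↔ inversionSign cs w x = -1 := by
    rw [← mem_NSet_iff, ← mem_NSet_iff, h]
  rcases Int.units_eq_one_or (inversionSign cs v x) with h1 | h1 <;>
    rcases Int.units_eq_one_or (inversionSign cs w x) with h2 | h2 <;>
    simp_all

lemma eq_one_of_NSet_eq_empty {w : W} (h : NSet cs w = ∅) : w = 1 := by
  by_contra hw
  obtain ⟨i, hi⟩ := cs.exists_leftDescent_of_ne_one hw
  have : cs.simple i ∈ NSet cs w := ⟨cs.isReflection_simple i, hi⟩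
  simp [h] at this

lemma NSet_injective : Function.Injective (NSet cs) := by
  intro v w h
  have hε := inversionSign_eq_of_NSet_eq cs h
  have : NSet cs (w⁻¹ * v) = ∅ := by
    ext x
    simp only [mem_NSet_iff, inversionSign_mul, inversionSign_inv, inv_inv, hε,
      Int.units_mul_self, Set.mem_empty_iff_false, iff_false]
    decide
  exact (inv_mul_eq_one.mp (eq_one_of_NSet_eq_empty cs this)).symm

end InversionSign

section Parabolic

variable (cs : CoxeterSystem M W) (I : Set S)

def TP : Set W := {t | cs.IsReflection t ∧ t ∈ WP cs I}

lemma mem_WP_of_inversionSign_ne_one {u x : W} (hu : u ∈ WP cs I)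
    (hx : inversionSign cs u x ≠ 1) : x ∈ WP cs I := by
  unfold WP at hu ⊢
  induction hu using Subgroup.closure_induction generalizing x with
  | mem _ h =>
    obtain ⟨i, hi, rfl⟩ := h
    rw [inversionSign_simple] at hx
    obtain rfl : x = cs.simple i := by
      by_contra hne
      exact hx (Pi.mulSingle_eq_of_ne hne _)
    exact Subgroup.subset_closure ⟨i, hi, rfl⟩
  | one => simp [inversionSign_one] at hx
  | mul u v hu _ ihu ihv =>
    rw [inversionSign_mul] at hx
    by_cases h : inversionSign cs u x = 1
    · rw [h, one_mul] at hx
      convert mul_mem (mul_mem hu (ihv hx)) (inv_mem hu) using 1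
      group
    · exact ihu h
  | inv u hu ih =>
    rw [inversionSign_inv] at hx
    convert mul_mem (mul_mem (inv_mem hu) (ih hx)) hu using 1
    group

lemma NSet_subset_TP {u : W} (hu : u ∈ WP cs I) : NSet cs u ⊆ TP cs I := fun x hx =>
  ⟨hx.1, mem_WP_of_inversionSign_ne_one cs I hu (by rw [(mem_NSet_iff cs).1 hx]; decide)⟩

lemma NSet_mul_inter_TP {u d : W} (hu : u ∈ WP cs I) (hd : Disjoint (NSet cs d) (TP cs I)) :
    NSet cs (u * d) ∩ TP cs I = NSet cs u := by
  have key : ∀ x ∈ TP cs I, inversionSign cs (u * d) x = inversionSign cs u x := by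
    rintro x ⟨hxr, hxW⟩
    have hy : u⁻¹ * x * u ∈ TP cs I := by
      refine ⟨?_, mul_mem (mul_mem (inv_mem hu) hxW) hu⟩
      simpa using (cs.isReflection_conj_iff u⁻¹ x).2 hxr
    have : inversionSign cs d (u⁻¹ * x * u) = 1 := (Int.units_eq_one_or _).resolve_right
      fun h => Set.disjoint_left.1 hd ((mem_NSet_iff cs).2 h) hy
    rw [inversionSign_mul, this, mul_one]
  ext x
  constructor
  · rintro ⟨hx, hxT⟩
    rwa [mem_NSet_iff, key x hxT, ← mem_NSet_iff] at hx
  · intro hx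
    have hxT := NSet_subset_TP cs I hu hx
    rw [mem_NSet_iff, ← key x hxT, ← mem_NSet_iff] at hx
    exact ⟨hx, hxT⟩

variable (w : W)

lemma tP_spec : (∃ u ∈ WP cs I, tP cs I w = u * w) ∧
    ∀ v, (∃ u ∈ WP cs I, v = u * w) → cs.length (tP cs I w) ≤ cs.length v := by
  have hne : {v | ∃ u ∈ WP cs I, v = u * w}.Nonempty := ⟨w, 1, one_mem _, (one_mul w).symm⟩
  obtain ⟨v, hv, hmin⟩ := (measure cs.length).wf.has_min _ hne
  have hex : ∃ v, (∃ u ∈ WP cs I, v = u * w) ∧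
      ∀ v', (∃ u ∈ WP cs I, v' = u * w) → cs.length v ≤ cs.length v' :=
    ⟨v, hv, fun v' hv' => not_lt.1 (hmin v' hv')⟩
  exact Classical.epsilon_spec hex

lemma mul_inv_tP_mem_WP : w * (tP cs I w)⁻¹ ∈ WP cs I := by
  obtain ⟨⟨u, hu, hd⟩, -⟩ := tP_spec cs I w
  rw [hd, mul_inv_rev, mul_inv_cancel_left]
  exact inv_mem hu

lemma disjoint_NSet_tP_TP : Disjoint (NSet cs (tP cs I w)) (TP cs I) := by
  obtain ⟨⟨u, hu, hd⟩, hmin⟩ := tP_spec cs I w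
  refine Set.disjoint_left.2 fun t ⟨_, hlt⟩ ⟨_, htW⟩ => ?_
  exact (hmin (t * tP cs I w) ⟨t * u, mul_mem htW hu, by rw [hd, mul_assoc]⟩).not_gt hlt

lemma NSet_mul_inv_tP : NSet cs (w * (tP cs I w)⁻¹) = NSet cs w ∩ TP cs I := by
  conv_rhs => rw [← inv_mul_cancel_right w (tP cs I w)]
  exact (NSet_mul_inter_TP cs I (mul_inv_tP_mem_WP cs I w) (disjoint_NSet_tP_TP cs I w)).symm

end Parabolic

/-- `π_I(w) := w · t_I(w)⁻¹` is the unique element `v ∈ W_I` such that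
`N(v) = N(w) ∩ T_I`. -/
theorem piW_unique (cs : CoxeterSystem M W) (I : Set S) (w : W) :
    ∀ v : W,
      (v ∈ WP cs I ∧ NSet cs v = NSet cs w ∩ {t | cs.IsReflection t ∧ t ∈ WP cs I}) ↔
        v = w * (tP cs I w)⁻¹ := by
  intro v
  constructor
  · rintro ⟨-, hv⟩
    exact NSet_injective cs (hv.trans (NSet_mul_inv_tP cs I w).symm)
  · rintro rfl
    exact ⟨mul_inv_tP_mem_WP cs I w, NSet_mul_inv_tP cs I w⟩

end DGM
end
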